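/- Let G = (V,A) be a connected simple directed graph on vertices V = {1,…,n}, K an algebraically closed field whose characteristic does not divide n, and ω ∈ K a primitive n-th root of unity. Let H_G ⊆ K[x_1,…,x_n] be the Hamiltonian ideal generated by {x_i^n − 1 : i ∈ V} ∪ {∏_{j∈δ⁺(i)}(ω x_i − x_j) : i ∈ V}, and for each Hamiltonian cycle permutation σ of G let I_σ be the cycle ideal generated by {x_v^n − 1 : v ∈ V} ∪ {x_{σ(v)} − ω x_v : v ∈ V}. Then H_G = ⋂_σ I_σ, where the intersection runs over all Hamiltonian cycle permutations σ of G (an empty intersection being the whole ring). -/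

import Mathlib

/-!
Every ideal containing all `X i ^ n - 1` is radical, so by Hilbert's Nullstellensatz `H_G` is
the ideal of its zero set. A zero `x` of `H_G` has `x j = ω * x i` along some arc `i → j` out of
every vertex; since `ω` is primitive, following these arcs from any vertex visits all `n` vertices
before returning, so they form a Hamiltonian cycle `σ` with `x` a zero of `I_σ`.
-/

open MvPolynomial

/-- The Hamiltonian ideal of a directed graph on `Fin n` with arc relation `A`. -/
noncomputable def hamIdeal (n : ℕ) (A : Fin n → Fin n → Prop) [DecidableRel A]
    {K : Type*} [Field K] (ω : K) : Ideal (MvPolynomial (Fin n) K) :=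
  Ideal.span ({p | ∃ i : Fin n, p = X i ^ n - 1} ∪
    {p | ∃ i : Fin n,
      p = ∏ j ∈ Finset.univ.filter (fun j => A i j), (C ω * X i - X j)})

/-- The cycle ideal of the Hamiltonian cycle given by the permutation `σ`. -/
noncomputable def cycleIdeal (n : ℕ) (σ : Equiv.Perm (Fin n))
    {K : Type*} [Field K] (ω : K) : Ideal (MvPolynomial (Fin n) K) :=
  Ideal.span ({p | ∃ v : Fin n, p = X v ^ n - 1} ∪
    {p | ∃ v : Fin n, p = X (σ v) - C ω * X v})

/-- A Hamiltonian cycle permutation: a single `n`-cycle whose successor arcs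
all lie in the digraph. -/
def IsHamCyclePerm (n : ℕ) (A : Fin n → Fin n → Prop) (σ : Equiv.Perm (Fin n)) : Prop :=
  σ.IsCycle ∧ σ.support = Finset.univ ∧ ∀ v, A v (σ v)

namespace MvPolynomial

variable {σ K : Type*} [Field K] {n : ℕ} {ω : K}

theorem X_pow_sub_one_eq_prod (hn : 0 < n) (hω : IsPrimitiveRoot ω n) (i : σ) :
    X i ^ n - 1 = ∏ r ∈ Polynomial.nthRootsFinset n (1 : K), (X i - C r) := by
  simpa using congrArg (Polynomial.aeval (X i : MvPolynomial σ K))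
    (Polynomial.X_pow_sub_one_eq_prod hn hω)

theorem mem_of_forall_pow_eq_one_eval_eq_zero [Finite σ] (hn : 0 < n)
    (hω : IsPrimitiveRoot ω n) {J : Ideal (MvPolynomial σ K)} (hJ : ∀ i, X i ^ n - 1 ∈ J)
    {f : MvPolynomial σ K} (hf : ∀ x : σ → K, (∀ i, x i ^ n = 1) → eval x f = 0) : f ∈ J := by
  obtain ⟨h, -, rfl⟩ := combinatorial_nullstellensatz_exists_linearCombination
    (fun _ => Polynomial.nthRootsFinset n (1 : K))
    (fun _ => ⟨1, (Polynomial.mem_nthRootsFinset hn 1).2 (one_pow n)⟩) f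
    (fun x hx => hf x fun i => (Polynomial.mem_nthRootsFinset hn 1).1 (hx i))
  rw [Finsupp.linearCombination_apply]
  refine Ideal.sum_mem _ fun i _ => Ideal.mul_mem_left _ _ ?_
  rw [← X_pow_sub_one_eq_prod hn hω]
  exact hJ i

theorem eval_polynomial_aeval (x : σ → K) (f : MvPolynomial σ K) (u : Polynomial K) :
    eval x (Polynomial.aeval f u) = u.eval (eval x f) := by
  simpa only [aeval_eq_eval, Polynomial.coe_aeval_eq_eval] using
    (Polynomial.aeval_algHom_apply (aeval x) f u).symm

/-- By the combinatorial Nullstellensatz, `J` contains every polynomial vanishing on the finite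
grid of `n`-th roots of unity. There `f` takes finitely many values, so `f * u(f) ∈ J` for a
polynomial `u` with `u(0) ≠ 0`; Bézout for `Xᵐ` and `u` then writes `f` as a combination of
`fᵐ⁺¹` and `f * u(f)`. -/
theorem isRadical_of_X_pow_sub_one_mem [Fintype σ] (hn : 0 < n)
    (hω : IsPrimitiveRoot ω n) {J : Ideal (MvPolynomial σ K)} (hJ : ∀ i, X i ^ n - 1 ∈ J) :
    J.IsRadical := by
  classical
  rintro f ⟨m, hm⟩
  let values := (Fintype.piFinset fun _ : σ => Polynomial.nthRootsFinset n (1 : K)).image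
    fun x => eval x f
  let u : Polynomial K := ∏ c ∈ values.erase 0, (Polynomial.X - Polynomial.C c)
  have hfu : f * Polynomial.aeval f u ∈ J := by
    refine mem_of_forall_pow_eq_one_eval_eq_zero hn hω hJ fun x hx => ?_
    rw [map_mul, eval_polynomial_aeval, mul_eq_zero, or_iff_not_imp_left]
    intro hx0
    rw [Polynomial.eval_prod]
    refine Finset.prod_eq_zero (i := eval x f) ?_ (by simp)
    refine Finset.mem_erase.2 ⟨hx0, Finset.mem_image.2 ⟨x, ?_, rfl⟩⟩
    simpa [Polynomial.mem_nthRootsFinset hn] using hx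
  have hcop : IsCoprime (Polynomial.X ^ m) u := by
    refine IsCoprime.pow_left (IsCoprime.prod_right fun c hc => ?_)
    simpa using Polynomial.isCoprime_X_sub_C_of_isUnit_sub (a := 0) (b := c)
      (by simpa using (Finset.ne_of_mem_erase hc))
  obtain ⟨a, b, hab⟩ := hcop
  have hf : f = Polynomial.aeval f a * f ^ m * f +
      Polynomial.aeval f b * (f * Polynomial.aeval f u) := by
    have := congrArg (Polynomial.aeval f) hab
    simp only [map_add, map_mul, map_pow, Polynomial.aeval_X, map_one] at this
    linear_combination -f * this
  rw [hf]
  exact J.add_mem (J.mul_mem_right _ (J.mul_mem_left _ hm)) (J.mul_mem_left _ hfu)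

end MvPolynomial

section Orbit

theorem apply_iterate_eq_pow_mul {α M : Type*} [CommMonoid M] {ω : M} {x : α → M}
    {s : α → α} (hs : ∀ a, x (s a) = ω * x a) (k : ℕ) (a : α) :
    x (s^[k] a) = ω ^ k * x a := by
  induction k with
  | zero => simp
  | succ k ih => rw [Function.iterate_succ_apply', hs, ih, pow_succ', mul_assoc]

variable {α K : Type*} [Fintype α] [CommRing K] [IsDomain K] {ω : K} {x : α → K} {s : α → α}

theorem surjective_iterate_apply (hω : IsPrimitiveRoot ω (Fintype.card α))
    (hx : ∀ a, x a ≠ 0) (hs : ∀ a, x (s a) = ω * x a) (a : α) :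
    Function.Surjective fun k : Fin (Fintype.card α) => s^[k] a := by
  refine ((Fintype.bijective_iff_injective_and_card _).2 ⟨fun k l hkl => ?_, by simp⟩).2
  have := congrArg x hkl
  simp only [apply_iterate_eq_pow_mul hs] at this
  exact Fin.ext (hω.pow_inj k.2 l.2 (mul_right_cancel₀ (hx a) this))

theorem bijective_of_apply_eq_mul (hω : IsPrimitiveRoot ω (Fintype.card α))
    (hx : ∀ a, x a ≠ 0) (hs : ∀ a, x (s a) = ω * x a) : Function.Bijective s := by
  refine Finite.surjective_iff_bijective.1 fun b => ?_
  obtain ⟨k, hk⟩ := surjective_iterate_apply hω hx hs (s b) b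
  exact ⟨s^[k] b, by rwa [← Function.iterate_succ_apply' s, Function.iterate_succ_apply]⟩

theorem exists_isCycle_of_apply_eq_mul [DecidableEq α] [Nonempty α]
    (hω : IsPrimitiveRoot ω (Fintype.card α))
    (hx : ∀ a, x a ≠ 0) (hs : ∀ a, x (s a) = ω * x a) (hfix : ∀ a, s a ≠ a) :
    ∃ σ : Equiv.Perm α, σ.IsCycle ∧ σ.support = Finset.univ ∧ ∀ a, σ a = s a := by
  let σ : Equiv.Perm α := Equiv.ofBijective s (bijective_of_apply_eq_mul hω hx hs)
  have hsupp : σ.support = Finset.univ :=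
    Finset.eq_univ_of_forall fun a => Equiv.Perm.mem_support.2 (hfix a)
  have hsame (a b : α) : σ.SameCycle a b := by
    obtain ⟨k, hk⟩ := surjective_iterate_apply hω hx hs a b
    exact ⟨k, by rw [zpow_natCast, Equiv.Perm.coe_pow]; exact hk⟩
  obtain ⟨a⟩ := ‹Nonempty α›
  exact ⟨σ, ⟨a, hfix a, fun b _ => hsame a b⟩, hsupp, fun _ => rfl⟩

end Orbit

section HamiltonianIdeal

variable {n : ℕ} {A : Fin n → Fin n → Prop} [DecidableRel A] {K : Type*} [Field K] {ω : K}

theorem hamIdeal_le_cycleIdeal {σ : Equiv.Perm (Fin n)} (hσ : ∀ v, A v (σ v)) :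
    hamIdeal n A ω ≤ cycleIdeal n σ ω := by
  rw [hamIdeal, Ideal.span_le]
  rintro q (⟨i, rfl⟩ | ⟨i, rfl⟩)
  · exact Ideal.subset_span (Or.inl ⟨i, rfl⟩)
  · have hσi : σ i ∈ Finset.univ.filter (A i) := Finset.mem_filter.2 ⟨Finset.mem_univ _, hσ i⟩
    rw [← Finset.mul_prod_erase _ _ hσi, ← neg_sub]
    exact Ideal.mul_mem_right _ _ (neg_mem (Ideal.subset_span (Or.inr ⟨i, rfl⟩)))

theorem pow_eq_one_of_mem_zeroLocus_hamIdeal {x : Fin n → K}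
    (hx : x ∈ zeroLocus K (hamIdeal n A ω)) (i : Fin n) : x i ^ n = 1 := by
  rw [hamIdeal, zeroLocus_span] at hx
  simpa [sub_eq_zero] using hx _ (Or.inl ⟨i, rfl⟩)

theorem exists_apply_eq_mul_of_mem_zeroLocus_hamIdeal {x : Fin n → K}
    (hx : x ∈ zeroLocus K (hamIdeal n A ω)) (i : Fin n) : ∃ j, A i j ∧ x j = ω * x i := by
  rw [hamIdeal, zeroLocus_span] at hx
  have := hx _ (Or.inr ⟨i, rfl⟩)
  simp only [aeval_eq_eval, map_prod, Finset.prod_eq_zero_iff] at this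
  obtain ⟨j, hj, hj0⟩ := this
  exact ⟨j, (Finset.mem_filter.1 hj).2, by simpa [sub_eq_zero, eq_comm] using hj0⟩

theorem mem_zeroLocus_cycleIdeal {σ : Equiv.Perm (Fin n)} {x : Fin n → K}
    (hx : ∀ v, x v ^ n = 1) (hσ : ∀ v, x (σ v) = ω * x v) :
    x ∈ zeroLocus K (cycleIdeal n σ ω) := by
  rw [cycleIdeal, zeroLocus_span]
  rintro p (⟨v, rfl⟩ | ⟨v, rfl⟩) <;> simp [hx, hσ]

theorem exists_isHamCyclePerm_of_mem_zeroLocus (hirr : ∀ i, ¬ A i i) (hn : 0 < n)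
    (hω : IsPrimitiveRoot ω n) {x : Fin n → K} (hx : x ∈ zeroLocus K (hamIdeal n A ω)) :
    ∃ σ, IsHamCyclePerm n A σ ∧ x ∈ zeroLocus K (cycleIdeal n σ ω) := by
  have hx1 := pow_eq_one_of_mem_zeroLocus_hamIdeal hx
  choose s hsA hs using exists_apply_eq_mul_of_mem_zeroLocus_hamIdeal hx
  have : Nonempty (Fin n) := ⟨⟨0, hn⟩⟩
  obtain ⟨σ, hcycle, hsupp, hσ⟩ := exists_isCycle_of_apply_eq_mul (x := x)
    (by rwa [Fintype.card_fin]) (fun i h => by simpa [h, hn.ne'] using hx1 i) hs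
    (fun i h => hirr i (by simpa [h] using hsA i))
  refine ⟨σ, ⟨hcycle, hsupp, fun v => hσ v ▸ hsA v⟩, mem_zeroLocus_cycleIdeal hx1 ?_⟩
  simpa [hσ] using hs

end HamiltonianIdeal

theorem stmt_10_general (n : ℕ) (A : Fin n → Fin n → Prop) [DecidableRel A]
    (hirr : ∀ i, ¬ A i i)
    (K : Type*) [Field K] [IsAlgClosed K] (hchar : (n : K) ≠ 0)
    (ω : K) (hω : IsPrimitiveRoot ω n) :
    hamIdeal n A ω =
      ⨅ (σ : Equiv.Perm (Fin n)) (_ : IsHamCyclePerm n A σ), cycleIdeal n σ ω := by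
  have hn : 0 < n := Nat.pos_of_ne_zero fun h => hchar (by simp [h])
  refine le_antisymm (le_iInf₂ fun σ hσ => hamIdeal_le_cycleIdeal hσ.2.2) fun f hf => ?_
  have hrad : (hamIdeal n A ω).IsRadical :=
    isRadical_of_X_pow_sub_one_mem hn hω fun i => Ideal.subset_span (Or.inl ⟨i, rfl⟩)
  refine hrad ?_
  rw [← vanishingIdeal_zeroLocus_eq_radical (K := K), mem_vanishingIdeal_iff]
  intro x hx
  obtain ⟨σ, hσ, hxσ⟩ := exists_isHamCyclePerm_of_mem_zeroLocus hirr hn hω hx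
  exact mem_zeroLocus_iff.1 hxσ f ((iInf₂_le σ hσ : _ ≤ cycleIdeal n σ ω) hf)

theorem stmt_10 (n : ℕ) (A : Fin n → Fin n → Prop) [DecidableRel A]
    (hirr : ∀ i, ¬ A i i) (hconn : (SimpleGraph.fromRel A).Connected)
    (K : Type*) [Field K] [IsAlgClosed K] (hchar : (n : K) ≠ 0)
    (ω : K) (hω : IsPrimitiveRoot ω n) :
    hamIdeal n A ω =
      ⨅ (σ : Equiv.Perm (Fin n)) (_ : IsHamCyclePerm n A σ), cycleIdeal n σ ω :=
  stmt_10_general n A hirr K hchar ω hω
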